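/- arXiv:1712.01385 — 4 statements merged into one kernel-verified Lean document; each statement's English description precedes it below -/
import Mathlib

section
/- Let P be a self-adjoint operator on a finite-dimensional Hilbert space H₀ with eigenvalues p₁, …, p_d (with multiplicity). For any orthonormal basis (z_i) of H₀, the sum of the positive parts of the diagonal elements satisfies ∑ᵢ max(⟨zᵢ, P zᵢ⟩, 0) ≤ ∑ᵢ max(pᵢ, 0). -/
/-!
Expanding in an eigenbasis `e` of `P` gives `⟪z i, P (z i)⟫ = ∑ j, p j * ‖⟪e j, z i⟫‖ ^ 2`, a
combination of the eigenvalues with nonnegative weights whose column sums are `‖e j‖ ^ 2 = 1` by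
Parseval (the weight matrix is doubly stochastic). The positive part of a nonnegative combination is
at most the same combination of positive parts, so summing over `i` and exchanging the sums gives
at most `∑ j, max (p j) 0`.
-/

open scoped InnerProductSpace

theorem max_sum_mul_zero_le_sum_max_zero_mul {κ : Type*} (s : Finset κ) (p w : κ → ℝ)
    (hw : ∀ j ∈ s, 0 ≤ w j) :
    max (∑ j ∈ s, p j * w j) 0 ≤ ∑ j ∈ s, max (p j) 0 * w j :=
  max_le (Finset.sum_le_sum fun j hj => mul_le_mul_of_nonneg_right (le_max_left _ _) (hw j hj))
    (Finset.sum_nonneg fun j hj => mul_nonneg (le_max_right _ _) (hw j hj))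

theorem sum_max_sum_mul_zero_le_sum_max_zero {ι κ : Type*} [Fintype ι] [Fintype κ]
    (p : κ → ℝ) (c : ι → κ → ℝ) (hc : ∀ i j, 0 ≤ c i j) (hcol : ∀ j, ∑ i, c i j ≤ 1) :
    ∑ i, max (∑ j, p j * c i j) 0 ≤ ∑ j, max (p j) 0 :=
  calc ∑ i, max (∑ j, p j * c i j) 0 ≤ ∑ i, ∑ j, max (p j) 0 * c i j :=
        Finset.sum_le_sum fun i _ =>
          max_sum_mul_zero_le_sum_max_zero_mul _ _ _ fun j _ => hc i j
    _ = ∑ j, max (p j) 0 * ∑ i, c i j := by rw [Finset.sum_comm]; simp only [Finset.mul_sum]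
    _ ≤ ∑ j, max (p j) 0 :=
        Finset.sum_le_sum fun j _ => mul_le_of_le_one_right (le_max_right _ _) (hcol j)

namespace LinearMap.IsSymmetric

variable {𝕜 E : Type*} [RCLike 𝕜] [NormedAddCommGroup E] [InnerProductSpace 𝕜 E]
  [FiniteDimensional 𝕜 E] {T : E →ₗ[𝕜] E} {n : ℕ}

theorem re_inner_apply_self_eq_sum_eigenvalues_mul (hT : T.IsSymmetric)
    (hn : Module.finrank 𝕜 E = n) (x : E) :
    RCLike.re ⟪x, T x⟫_𝕜 =
      ∑ j, hT.eigenvalues hn j * ‖⟪hT.eigenvectorBasis hn j, x⟫_𝕜‖ ^ 2 := by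
  set e := hT.eigenvectorBasis hn
  have hterm : ∀ j, ⟪x, e j⟫_𝕜 * ⟪e j, T x⟫_𝕜 =
      (hT.eigenvalues hn j : 𝕜) * (‖⟪e j, x⟫_𝕜‖ ^ 2 : ℝ) := by
    intro j
    -- symmetry moves `T` onto the eigenvector: `⟪e j, T x⟫ = p j * ⟪e j, x⟫`
    rw [← hT (e j) x, hT.apply_eigenvectorBasis hn j, inner_smul_left, RCLike.conj_ofReal,
      ← inner_conj_symm x (e j), RCLike.ofReal_pow, ← RCLike.mul_conj]
    ring
  rw [← e.sum_inner_mul_inner x (T x), Finset.sum_congr rfl fun j _ => hterm j, map_sum]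
  simp only [← RCLike.ofReal_mul, RCLike.ofReal_re]

end LinearMap.IsSymmetric

/-- Schur–Horn bound: for a self-adjoint operator `P` on a finite-dimensional Hilbert space,
and any orthonormal basis `z`, the sum of the positive parts of the diagonal elements
`⟨z i, P (z i)⟩` is at most the sum of the positive parts of the eigenvalues of `P`. -/
theorem sum_posPart_diagonal_le_sum_posPart_eigenvalues
    {H₀ : Type*} [NormedAddCommGroup H₀] [InnerProductSpace ℂ H₀]
    [FiniteDimensional ℂ H₀] {d : ℕ} (hd : Module.finrank ℂ H₀ = d)
    (P : H₀ →ₗ[ℂ] H₀) (hP : P.IsSymmetric)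
    (z : OrthonormalBasis (Fin d) ℂ H₀) :
    ∑ i, max (⟪z i, P (z i)⟫_ℂ).re 0 ≤ ∑ i, max (hP.eigenvalues hd i) 0 := by
  set e := hP.eigenvectorBasis hd
  have hcol : ∀ j, ∑ i, ‖⟪e j, z i⟫_ℂ‖ ^ 2 ≤ 1 := fun j => by
    rw [z.sum_sq_norm_inner_left, e.orthonormal.1 j, one_pow]
  simp only [← RCLike.re_to_complex, hP.re_inner_apply_self_eq_sum_eigenvalues_mul hd]
  exact sum_max_sum_mul_zero_le_sum_max_zero _ _ (fun _ _ => by positivity) hcol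
end

section
/- Let H be a Hilbert space, u₁, …, u_N ∈ H, and λ₁, …, λ_N ∈ ℝ. Define the N×N Gram matrix Q with Q_{mn} = ⟨u_m, u_n⟩ and the diagonal matrix Λ with entries λ_n. If Q = S* S is any decomposition and P = S Λ S*, then the supremum of ∑ₙ λₙ ⟨uₙ, E uₙ⟩ over all orthogonal projections E ∈ B(H) equals the sum of the positive eigenvalues of the self-adjoint matrix P. -/
open scoped InnerProductSpace
open ContinuousLinearMap

/-!
Since `S* S` is the Gram matrix of the `uₙ`, the assignment `S eₙ ↦ uₙ` extends to a linear map
`L : ℂᵈ → H` that is isometric on the range of `S`. Expanding in an orthonormal eigenbasis `vᵢ`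
of `P = S Λ S*` gives `∑ₙ λₙ ⟪uₙ, E uₙ⟫ = ∑ᵢ μᵢ ⟪L vᵢ, E (L vᵢ)⟫` for every operator `E`, and the
`L vᵢ` with `μᵢ ≠ 0` are orthonormal because those `vᵢ` lie in `range P ⊆ range S`. For a
projection `E` and a unit vector `ψ`, `re ⟪ψ, E ψ⟫ ∈ [0, 1]`, so the sum is at most
`∑ᵢ max μᵢ 0`, and the projection onto the span of the `L vᵢ` with `μᵢ > 0` attains this bound.
-/

theorem LinearMap.exists_comp_eq_of_ker_le {K V V₁ V₂ : Type*} [DivisionRing K]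
    [AddCommGroup V] [Module K V] [AddCommGroup V₁] [Module K V₁] [AddCommGroup V₂] [Module K V₂]
    (f : V →ₗ[K] V₁) (g : V →ₗ[K] V₂) (h : ker f ≤ ker g) : ∃ l : V₁ →ₗ[K] V₂, l ∘ₗ f = g := by
  obtain ⟨l, hl⟩ := ((ker f).liftQ g h ∘ₗ f.quotKerEquivRange.symm.toLinearMap).exists_extend
  refine ⟨l, LinearMap.ext fun x => ?_⟩
  simpa [quotKerEquivRange_symm_apply_image] using congr($hl ⟨f x, mem_range_self f x⟩)

theorem IsStarProjection.re_inner_apply_self_mem_Icc {𝕜 H : Type*} [RCLike 𝕜]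
    [NormedAddCommGroup H] [InnerProductSpace 𝕜 H] [CompleteSpace H] {E : H →L[𝕜] H}
    (hE : IsStarProjection E) {x : H} (hx : ‖x‖ = 1) :
    RCLike.re ⟪x, E x⟫_𝕜 ∈ Set.Icc 0 1 := by
  have h₀ := (IsPositive.of_isStarProjection hE).re_inner_nonneg_right x
  have h₁ := (IsPositive.of_isStarProjection hE.one_sub).re_inner_nonneg_right x
  simp only [sub_apply, one_apply_eq_self, inner_sub_right, map_sub, inner_self_eq_norm_sq,
    hx] at h₁
  constructor <;> linarith

section Gram

variable {𝕜 ι W H : Type*} [RCLike 𝕜] [Fintype ι]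
  [NormedAddCommGroup W] [InnerProductSpace 𝕜 W] [NormedAddCommGroup H] [InnerProductSpace 𝕜 H]
  {u : ι → H} {w : ι → W}

theorem inner_linearCombination_eq_of_gram_eq (h : Matrix.gram 𝕜 u = Matrix.gram 𝕜 w)
    (a b : ι → 𝕜) :
    ⟪Fintype.linearCombination 𝕜 u a, Fintype.linearCombination 𝕜 u b⟫_𝕜 =
      ⟪Fintype.linearCombination 𝕜 w a, Fintype.linearCombination 𝕜 w b⟫_𝕜 := by
  have h' (m n : ι) : ⟪u m, u n⟫_𝕜 = ⟪w m, w n⟫_𝕜 := congr($h m n)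
  simp [Fintype.linearCombination_apply, sum_inner, inner_sum, inner_smul_left,
    inner_smul_right, h']

theorem exists_linearMap_apply_eq_of_gram_eq (h : Matrix.gram 𝕜 u = Matrix.gram 𝕜 w) :
    ∃ L : W →ₗ[𝕜] H, ∀ n, L (w n) = u n := by
  classical
  have hker : LinearMap.ker (Fintype.linearCombination 𝕜 w) ≤
      LinearMap.ker (Fintype.linearCombination 𝕜 u) := fun a ha => by
    rw [LinearMap.mem_ker, ← inner_self_eq_zero (𝕜 := 𝕜),
      inner_linearCombination_eq_of_gram_eq h, LinearMap.mem_ker.mp ha, inner_zero_left]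
  obtain ⟨L, hL⟩ := LinearMap.exists_comp_eq_of_ker_le _ _ hker
  exact ⟨L, fun n => by simpa using congr($hL (Pi.single n 1))⟩

theorem inner_map_map_of_mem_span (h : Matrix.gram 𝕜 u = Matrix.gram 𝕜 w)
    {L : W →ₗ[𝕜] H} (hL : ∀ n, L (w n) = u n) {x y : W}
    (hx : x ∈ Submodule.span 𝕜 (Set.range w)) (hy : y ∈ Submodule.span 𝕜 (Set.range w)) :
    ⟪L x, L y⟫_𝕜 = ⟪x, y⟫_𝕜 := by
  obtain ⟨a, rfl⟩ := (Submodule.mem_span_range_iff_exists_fun 𝕜).mp hx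
  obtain ⟨b, rfl⟩ := (Submodule.mem_span_range_iff_exists_fun 𝕜).mp hy
  have hLc (c : ι → 𝕜) : L (∑ i, c i • w i) = Fintype.linearCombination 𝕜 u c := by
    simp [Fintype.linearCombination_apply, hL]
  rw [hLc, hLc]
  simpa [Fintype.linearCombination_apply] using inner_linearCombination_eq_of_gram_eq h a b

end Gram

def weightedFrameOperator (𝕜 : Type*) {ι W : Type*} [RCLike 𝕜] [Fintype ι]
    [NormedAddCommGroup W] [InnerProductSpace 𝕜 W] (w : ι → W) (lam : ι → ℝ) (x : W) : W :=
  ∑ n, ((lam n : 𝕜) * ⟪w n, x⟫_𝕜) • w n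

section FrameOperator

variable {𝕜 ι κ W H : Type*} [RCLike 𝕜] [Fintype ι] [Fintype κ]
  [NormedAddCommGroup W] [InnerProductSpace 𝕜 W] [NormedAddCommGroup H] [InnerProductSpace 𝕜 H]

variable {w : ι → W} {lam : ι → ℝ}

theorem mem_span_of_weightedFrameOperator_eq_smul {x : W} {μ : ℝ}
    (hx : weightedFrameOperator 𝕜 w lam x = (μ : 𝕜) • x) (hμ : μ ≠ 0) :
    x ∈ Submodule.span 𝕜 (Set.range w) := by
  rw [← inv_smul_smul₀ (by exact_mod_cast hμ : (μ : 𝕜) ≠ 0) x, ← hx]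
  exact Submodule.smul_mem _ _ <| Submodule.sum_mem _ fun n _ =>
    Submodule.smul_mem _ _ <| Submodule.subset_span ⟨n, rfl⟩

theorem sum_mul_inner_eq_sum_eigenvalue_mul_inner (v : OrthonormalBasis κ 𝕜 W) {μ : κ → ℝ}
    (hv : ∀ i, weightedFrameOperator 𝕜 w lam (v i) = (μ i : 𝕜) • v i) (F G : W →ₗ[𝕜] H) :
    ∑ n, (lam n : 𝕜) * ⟪F (w n), G (w n)⟫_𝕜 = ∑ i, (μ i : 𝕜) * ⟪F (v i), G (v i)⟫_𝕜 := by
  calc ∑ n, (lam n : 𝕜) * ⟪F (w n), G (w n)⟫_𝕜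
      = ∑ n, ∑ i, (lam n : 𝕜) * ⟪v i, w n⟫_𝕜 * ⟪F (w n), G (v i)⟫_𝕜 := by
        refine Finset.sum_congr rfl fun n _ => ?_
        have hG : G (w n) = ∑ i, ⟪v i, w n⟫_𝕜 • G (v i) := by
          conv_lhs => rw [← v.sum_repr' (w n)]
          simp
        simp [hG, inner_sum, inner_smul_right, Finset.mul_sum, mul_assoc, mul_left_comm]
    _ = ∑ i, ⟪F (weightedFrameOperator 𝕜 w lam (v i)), G (v i)⟫_𝕜 := by
        rw [Finset.sum_comm]
        refine Finset.sum_congr rfl fun i _ => ?_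
        simp [weightedFrameOperator, sum_inner, inner_smul_left, mul_assoc]
    _ = ∑ i, (μ i : 𝕜) * ⟪F (v i), G (v i)⟫_𝕜 := by
        simp [hv, inner_smul_left]

end FrameOperator

section StarProjection

variable {𝕜 κ H : Type*} [RCLike 𝕜] [Fintype κ]
  [NormedAddCommGroup H] [InnerProductSpace 𝕜 H] [CompleteSpace H]
  {ψ : κ → H} {μ : κ → ℝ}

theorem sum_mul_re_inner_apply_self_le (hψ : Orthonormal 𝕜 fun i : {i // μ i ≠ 0} => ψ i)
    {E : H →L[𝕜] H} (hE : IsStarProjection E) :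
    ∑ i, μ i * RCLike.re ⟪ψ i, E (ψ i)⟫_𝕜 ≤ ∑ i, max (μ i) 0 := by
  refine Finset.sum_le_sum fun i _ => ?_
  by_cases hμ : μ i = 0
  · simp [hμ]
  obtain ⟨h₀, h₁⟩ := hE.re_inner_apply_self_mem_Icc (hψ.1 ⟨i, hμ⟩)
  rcases le_total (μ i) 0 with h | h
  · nlinarith [le_max_right (μ i) 0]
  · nlinarith [le_max_left (μ i) 0]

theorem exists_isStarProjection_sum_mul_re_inner_apply_self_eq
    (hψ : Orthonormal 𝕜 fun i : {i // μ i ≠ 0} => ψ i) :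
    ∃ E : H →L[𝕜] H, IsStarProjection E ∧
      ∑ i, μ i * RCLike.re ⟪ψ i, E (ψ i)⟫_𝕜 = ∑ i, max (μ i) 0 := by
  let K := Submodule.span 𝕜 (Set.range fun i : {i // 0 < μ i} => ψ i)
  have : FiniteDimensional 𝕜 K := FiniteDimensional.span_of_finite 𝕜 (Set.finite_range _)
  refine ⟨K.starProjection, isStarProjection_starProjection, Finset.sum_congr rfl fun i _ => ?_⟩
  rcases lt_trichotomy (μ i) 0 with hneg | hzero | hpos
  · suffices K.starProjection (ψ i) = 0 by simp [this, hneg.le]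
    refine (K.starProjection_apply_eq_zero_iff).mpr <| Submodule.isOrtho_iff_le.mp ?_
      (Submodule.mem_span_singleton_self (ψ i))
    refine Submodule.isOrtho_span.mpr ?_
    rintro _ rfl _ ⟨j, rfl⟩
    have hij : i ≠ j := fun h => (hneg.trans (h ▸ j.2)).false
    exact hψ.2 (i := ⟨i, hneg.ne⟩) (j := ⟨j, j.2.ne'⟩) (by simpa using hij)
  · simp [hzero]
  · have hK : K.starProjection (ψ i) = ψ i :=
      Submodule.starProjection_eq_self_iff.mpr (Submodule.subset_span ⟨⟨i, hpos⟩, rfl⟩)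
    simp [hK, hψ.1 ⟨i, hpos.ne'⟩, hpos.le]

theorem sSup_sum_mul_re_inner_apply_self_eq (hψ : Orthonormal 𝕜 fun i : {i // μ i ≠ 0} => ψ i) :
    sSup {t : ℝ | ∃ E : H →L[𝕜] H, IsStarProjection E ∧
      t = ∑ i, μ i * RCLike.re ⟪ψ i, E (ψ i)⟫_𝕜} = ∑ i, max (μ i) 0 := by
  obtain ⟨E, hE, hval⟩ := exists_isStarProjection_sum_mul_re_inner_apply_self_eq hψ
  refine IsGreatest.csSup_eq ⟨⟨E, hE, hval.symm⟩, ?_⟩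
  rintro t ⟨E', hE', rfl⟩
  exact sum_mul_re_inner_apply_self_le hψ hE'

end StarProjection

theorem sSup_sum_mul_re_inner_apply_self_eq_of_gram_eq {𝕜 ι κ W H : Type*} [RCLike 𝕜]
    [Fintype ι] [Fintype κ] [NormedAddCommGroup W] [InnerProductSpace 𝕜 W]
    [NormedAddCommGroup H] [InnerProductSpace 𝕜 H] [CompleteSpace H]
    {u : ι → H} {w : ι → W} (hw : Matrix.gram 𝕜 u = Matrix.gram 𝕜 w) (lam : ι → ℝ)
    (v : OrthonormalBasis κ 𝕜 W) {μ : κ → ℝ}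
    (hv : ∀ i, weightedFrameOperator 𝕜 w lam (v i) = (μ i : 𝕜) • v i) :
    sSup {t : ℝ | ∃ E : H →L[𝕜] H, IsStarProjection E ∧
      t = ∑ n, lam n * RCLike.re ⟪u n, E (u n)⟫_𝕜} = ∑ i, max (μ i) 0 := by
  classical
  obtain ⟨L, hL⟩ := exists_linearMap_apply_eq_of_gram_eq hw
  have hval (E : H →L[𝕜] H) : ∑ n, lam n * RCLike.re ⟪u n, E (u n)⟫_𝕜 =
      ∑ i, μ i * RCLike.re ⟪L (v i), E (L (v i))⟫_𝕜 := by
    simpa [hL] using congr(RCLike.re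
      $(sum_mul_inner_eq_sum_eigenvalue_mul_inner v hv L (E.toLinearMap ∘ₗ L)))
  have hψ : Orthonormal 𝕜 fun i : {i // μ i ≠ 0} => L (v i) := by
    have hspan (i : {i // μ i ≠ 0}) : v i ∈ Submodule.span 𝕜 (Set.range w) :=
      mem_span_of_weightedFrameOperator_eq_smul (hv i) i.2
    refine orthonormal_iff_ite.mpr fun i j => ?_
    rw [inner_map_map_of_mem_span hw hL (hspan i) (hspan j),
      orthonormal_iff_ite.mp v.orthonormal]
    simp [Subtype.ext_iff]
  simp_rw [hval]
  exact sSup_sum_mul_re_inner_apply_self_eq hψ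

section Matrix

open Matrix

variable {𝕜 m n : Type*} [RCLike 𝕜] [Fintype m]

theorem Matrix.gram_toLp_transpose (S : Matrix m n 𝕜) :
    gram 𝕜 (fun j => WithLp.toLp 2 (Sᵀ j)) = Sᴴ * S := by
  ext i j
  simp [gram_apply, PiLp.inner_apply, mul_apply, mul_comm]

theorem Matrix.weightedFrameOperator_toLp_transpose [Fintype n] [DecidableEq n]
    (S : Matrix m n 𝕜) (lam : n → ℝ) (x : EuclideanSpace 𝕜 m) :
    weightedFrameOperator 𝕜 (fun j => WithLp.toLp 2 (Sᵀ j)) lam x =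
      WithLp.toLp 2 ((S * diagonal (fun j => (lam j : 𝕜)) * Sᴴ) *ᵥ x) := by
  ext k
  simp [weightedFrameOperator, PiLp.inner_apply, mulVec, dotProduct, mul_apply, diagonal_apply,
    Finset.mul_sum, Finset.sum_mul]
  rw [Finset.sum_comm]
  exact Finset.sum_congr rfl fun _ _ => Finset.sum_congr rfl fun _ _ => by ring

end Matrix

/-- Quantum bound: for vectors `u n` in a Hilbert space and scalars `lam n`, the supremum of
`∑ n, lam n * ⟨u n, E u n⟩` over all orthogonal projections `E` equals the sum of the
positive eigenvalues of `P = S Λ S*`, where `S* S = Q` is the Gram matrix `Q m n = ⟨u m, u n⟩`. -/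
theorem sup_projection_valuation_eq_sum_pos_eigenvalues
    {H : Type*} [NormedAddCommGroup H] [InnerProductSpace ℂ H] [CompleteSpace H]
    {N d : ℕ} (u : Fin N → H) (lam : Fin N → ℝ)
    (S : Matrix (Fin d) (Fin N) ℂ)
    (hS : S.conjTranspose * S = Matrix.of fun m n => ⟪u m, u n⟫_ℂ)
    (hP : (S * Matrix.diagonal (fun n => (lam n : ℂ)) * S.conjTranspose).IsHermitian) :
    sSup {t : ℝ | ∃ E : H →L[ℂ] H, IsSelfAdjoint E ∧ E ∘L E = E ∧
        t = ∑ n, lam n * (⟪u n, E (u n)⟫_ℂ).re}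
      = ∑ i, max (hP.eigenvalues i) 0 := by
  have hgram : Matrix.gram ℂ u = Matrix.gram ℂ (fun n => WithLp.toLp 2 (S.transpose n)) := by
    rw [Matrix.gram_toLp_transpose, hS]
    rfl
  have heigen (i : Fin d) : weightedFrameOperator ℂ (fun n => WithLp.toLp 2 (S.transpose n)) lam
      (hP.eigenvectorBasis i) = (hP.eigenvalues i : ℂ) • hP.eigenvectorBasis i := by
    rw [Matrix.weightedFrameOperator_toLp_transpose]
    ext k
    simpa [Complex.real_smul] using congr_fun (hP.mulVec_eigenvectorBasis i) k
  rw [← sSup_sum_mul_re_inner_apply_self_eq_of_gram_eq (μ := hP.eigenvalues) hgram lam hP.eigenvectorBasis heigen]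
  congr 1
  ext t
  refine exists_congr fun E => ?_
  simp only [isStarProjection_iff, IsIdempotentElem, mul_def, RCLike.re_to_complex]
  tauto
end

section
/- Let μ be a finite positive measure (pricing model E) and a a nonnegative measurable function (asset) with E[a] = f > 0, and let ν = (E[a] − E[√a]²)/E[a]. Then for every strike k > 0, E[(a − k)⁺] ≤ ½(f − k) + ½√((f − k)² + 4 f k ν), where (x)⁺ = max(x, 0). -/
open MeasureTheory

/-! Since `(x)⁺ = (x + |x|)/2`, it suffices to bound `E|a - k|`. Factor
`|a - k| = |√a - √k| (√a + √k)` and apply Cauchy–Schwarz: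
`E|a - k| ≤ √(E(√a - √k)² · E(√a + √k)²) = √((f + k)² - 4k E[√a]²) = √((f - k)² + 4fkν)`. -/

section

variable {α : Type*} [MeasurableSpace α] {μ : Measure α}

theorem integral_max_zero_eq {X : α → ℝ} (hX : Integrable X μ) :
    ∫ x, max (X x) 0 ∂μ = ((∫ x, X x ∂μ) + ∫ x, |X x| ∂μ) / 2 := by
  have hpos : ∀ x, max (X x) 0 = (X x + |X x|) / 2 := fun x => by
    rcases le_total (X x) 0 with h | h
    · rw [max_eq_right h, abs_of_nonpos h]; ring
    · rw [max_eq_left h, abs_of_nonneg h]; ring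
  simp_rw [hpos]
  rw [integral_div, integral_add hX hX.abs]

theorem integral_mul_le_sqrt_integral_sq_mul_sqrt_integral_sq {f g : α → ℝ}
    (hf₀ : 0 ≤ᵐ[μ] f) (hg₀ : 0 ≤ᵐ[μ] g) (hf : MemLp f 2 μ) (hg : MemLp g 2 μ) :
    ∫ x, f x * g x ∂μ ≤ √(∫ x, f x ^ 2 ∂μ) * √(∫ x, g x ^ 2 ∂μ) := by
  have h := integral_mul_le_Lp_mul_Lq_of_nonneg Real.HolderConjugate.two_two hf₀ hg₀
    (by rwa [ENNReal.ofReal_ofNat]) (by rwa [ENNReal.ofReal_ofNat])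
  simpa only [Real.rpow_two, Real.sqrt_eq_rpow] using h

theorem memLp_two_sqrt {a : α → ℝ} (ha : ∀ x, 0 ≤ a x) (hint : Integrable a μ) :
    MemLp (fun x => √(a x)) 2 μ := by
  rw [memLp_two_iff_integrable_sq hint.aestronglyMeasurable.aemeasurable.sqrt.aestronglyMeasurable]
  simpa only [Real.sq_sqrt (ha _)] using hint

end

section

variable {Ω : Type*} [MeasurableSpace Ω] {μ : Measure Ω} [IsProbabilityMeasure μ]

theorem integral_add_const_sq {g : Ω → ℝ} (hg : MemLp g 2 μ) (c : ℝ) :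
    ∫ ω, (g ω + c) ^ 2 ∂μ = (∫ ω, g ω ^ 2 ∂μ) + 2 * c * (∫ ω, g ω ∂μ) + c ^ 2 := by
  have hexp : ∀ ω, (g ω + c) ^ 2 = g ω ^ 2 + 2 * c * g ω + c ^ 2 := fun ω => by ring
  have hlin : Integrable (fun ω => 2 * c * g ω) μ := (hg.integrable one_le_two).const_mul _
  simp_rw [hexp]
  rw [integral_add (f := fun ω => g ω ^ 2 + 2 * c * g ω) (hg.integrable_sq.add hlin)
      (integrable_const _), integral_add hg.integrable_sq hlin, integral_const_mul,
    integral_const, probReal_univ, one_smul]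

theorem integral_abs_sub_const_le_sqrt {a : Ω → ℝ} (ha : ∀ ω, 0 ≤ a ω)
    (hint : Integrable a μ) {k : ℝ} (hk : 0 ≤ k) :
    ∫ ω, |a ω - k| ∂μ ≤
      √(((∫ ω, a ω ∂μ) + k) ^ 2 - 4 * k * (∫ ω, √(a ω) ∂μ) ^ 2) := by
  have hg : MemLp (fun ω => √(a ω)) 2 μ := memLp_two_sqrt ha hint
  have hsq : ∫ ω, √(a ω) ^ 2 ∂μ = ∫ ω, a ω ∂μ := by simp_rw [Real.sq_sqrt (ha _)]
  have hc : √k ^ 2 = k := Real.sq_sqrt hk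
  have hfactor : ∀ ω, |a ω - k| = |√(a ω) - √k| * (√(a ω) + √k) := fun ω => by
    rw [← abs_of_nonneg (by positivity : 0 ≤ √(a ω) + √k), ← abs_mul]
    congr 1
    linear_combination hc - Real.sq_sqrt (ha ω)
  have hminus : ∫ ω, |√(a ω) - √k| ^ 2 ∂μ = (∫ ω, a ω ∂μ) - 2 * √k * (∫ ω, √(a ω) ∂μ) + k := by
    simp_rw [sq_abs, sub_eq_add_neg, integral_add_const_sq hg, hsq]
    rw [neg_sq, hc]; ring
  have hplus : ∫ ω, (√(a ω) + √k) ^ 2 ∂μ = (∫ ω, a ω ∂μ) + 2 * √k * (∫ ω, √(a ω) ∂μ) + k := by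
    rw [integral_add_const_sq hg, hsq, hc]
  calc ∫ ω, |a ω - k| ∂μ = ∫ ω, |√(a ω) - √k| * (√(a ω) + √k) ∂μ := by simp_rw [hfactor]
    _ ≤ √(∫ ω, |√(a ω) - √k| ^ 2 ∂μ) * √(∫ ω, (√(a ω) + √k) ^ 2 ∂μ) :=
      integral_mul_le_sqrt_integral_sq_mul_sqrt_integral_sq
        (.of_forall fun _ => abs_nonneg _) (.of_forall fun _ => by positivity)
        (hg.sub (memLp_const √k)).abs (hg.add (memLp_const √k))
    _ = √(((∫ ω, a ω ∂μ) + k) ^ 2 - 4 * k * (∫ ω, √(a ω) ∂μ) ^ 2) := by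
      rw [← Real.sqrt_mul (integral_nonneg fun _ => sq_nonneg _), hminus, hplus]
      congr 1
      linear_combination (-4 * (∫ ω, √(a ω) ∂μ) ^ 2) * hc

end

theorem vanilla_option_price_bound_general
    {Ω : Type*} [MeasurableSpace Ω] (μ : Measure Ω) [IsProbabilityMeasure μ]
    (a : Ω → ℝ) (ha : ∀ ω, 0 ≤ a ω)
    (hint : Integrable a μ)
    (f ν : ℝ) (hf : f = ∫ ω, a ω ∂μ) (hfpos : 0 < f)
    (hν : ν = (f - (∫ ω, Real.sqrt (a ω) ∂μ) ^ 2) / f)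
    (k : ℝ) (hk : 0 < k) :
    ∫ ω, max (a ω - k) 0 ∂μ ≤
      (f - k) / 2 + Real.sqrt ((f - k) ^ 2 + 4 * f * k * ν) / 2 := by
  have hdisc : (f + k) ^ 2 - 4 * k * (∫ ω, √(a ω) ∂μ) ^ 2 = (f - k) ^ 2 + 4 * f * k * ν := by
    rw [hν]; field_simp; ring
  have hk_int : Integrable (fun _ => k) μ := integrable_const k
  calc ∫ ω, max (a ω - k) 0 ∂μ = ((f - k) + ∫ ω, |a ω - k| ∂μ) / 2 := by
        rw [integral_max_zero_eq (X := fun ω => a ω - k) (hint.sub hk_int),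
          integral_sub hint hk_int, ← hf]
        simp
    _ ≤ ((f - k) + √((f + k) ^ 2 - 4 * k * (∫ ω, √(a ω) ∂μ) ^ 2)) / 2 := by
        gcongr
        exact hf ▸ integral_abs_sub_const_le_sqrt ha hint hk.le
    _ = (f - k) / 2 + √((f - k) ^ 2 + 4 * f * k * ν) / 2 := by rw [hdisc]; ring

/-- Upper bound for the vanilla option price: if `E[a] = f > 0` and
`ν = (E[a] − E[√a]²)/E[a]`, then for every strike `k > 0`,
`E[(a − k)⁺] ≤ ½(f − k) + ½√((f − k)² + 4 f k ν)`. -/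
theorem vanilla_option_price_bound
    {Ω : Type*} [MeasurableSpace Ω] (μ : Measure Ω) [IsProbabilityMeasure μ]
    (a : Ω → ℝ) (ha : ∀ ω, 0 ≤ a ω) (hmeas : Measurable a)
    (hint : Integrable a μ)
    (f ν : ℝ) (hf : f = ∫ ω, a ω ∂μ) (hfpos : 0 < f)
    (hν : ν = (f - (∫ ω, Real.sqrt (a ω) ∂μ) ^ 2) / f)
    (k : ℝ) (hk : 0 < k) :
    ∫ ω, max (a ω - k) 0 ∂μ ≤
      (f - k) / 2 + Real.sqrt ((f - k) ^ 2 + 4 * f * k * ν) / 2 :=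
  vanilla_option_price_bound_general μ a ha hint f ν hf hfpos hν k hk
end

section
/- Let x₁, x₂ be positive random variables under a probability measure Ē with Ē[x₂] > 0, and define the measure E by E[a] = Ē[a x₂]/Ē[x₂]. Set x = x₁/x₂, ν = (E[x] − E[√x]²)/E[x], νᵢ = (Ē[xᵢ] − Ē[√xᵢ]²)/Ē[xᵢ] for i = 1,2, and ρ = (Ē[√(x₁x₂)] − Ē[√x₁]Ē[√x₂])/√((Ē[x₁] − Ē[√x₁]²)(Ē[x₂] − Ē[√x₂]²)). Then ν = 1 − (√((1−ν₁)(1−ν₂)) + ρ√(ν₁ν₂))². -/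
/-!
Write `mᵢ = Ē[xᵢ]`, `sᵢ = Ē[√xᵢ]` and `c = Ē[√(x₁x₂)]`. The change of numéraire turns the
`E`-moments of the cross rate into `E[x] = m₁/m₂` and `E[√x] = c/m₂`, so
`1 − ν = E[√x]²/E[x] = c²/(m₁m₂)`. On the other side `1 − νᵢ = sᵢ²/mᵢ`, so
`√((1−ν₁)(1−ν₂)) = s₁s₂/√(m₁m₂)`, while `ρ√(ν₁ν₂) = (c − s₁s₂)/√(m₁m₂)` because the
variances in the correlation cancel; the two terms add up to `c/√(m₁m₂)`.
-/

open MeasureTheory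

namespace CrossRate

/-- The root-variance `(E[x] − E[√x]²)/E[x]`, as a function of `m = E[x]` and `s = E[√x]`. -/
noncomputable def rootVariance (m s : ℝ) : ℝ := (m - s ^ 2) / m

/-- The correlation of `√x₁` and `√x₂`, as a function of `mᵢ = E[xᵢ]`, `sᵢ = E[√xᵢ]` and
`c = E[√(x₁x₂)]`. -/
noncomputable def sqrtCorrelation (m₁ m₂ s₁ s₂ c : ℝ) : ℝ :=
  (c - s₁ * s₂) / Real.sqrt ((m₁ - s₁ ^ 2) * (m₂ - s₂ ^ 2))

theorem one_sub_rootVariance {m : ℝ} (hm : m ≠ 0) (s : ℝ) :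
    1 - rootVariance m s = s ^ 2 / m := by
  unfold rootVariance
  field_simp
  ring

theorem sqrt_one_sub_rootVariance_mul {m₁ m₂ s₁ s₂ : ℝ} (hm₁ : 0 < m₁) (hm₂ : 0 < m₂)
    (hs : 0 ≤ s₁ * s₂) :
    Real.sqrt ((1 - rootVariance m₁ s₁) * (1 - rootVariance m₂ s₂))
      = s₁ * s₂ / Real.sqrt (m₁ * m₂) := by
  have hsq : (1 - rootVariance m₁ s₁) * (1 - rootVariance m₂ s₂)
      = (s₁ * s₂ / Real.sqrt (m₁ * m₂)) ^ 2 := by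
    rw [one_sub_rootVariance hm₁.ne', one_sub_rootVariance hm₂.ne', div_pow,
      Real.sq_sqrt (mul_pos hm₁ hm₂).le]
    ring
  rw [hsq, Real.sqrt_sq (div_nonneg hs (Real.sqrt_nonneg _))]

theorem sqrtCorrelation_mul_sqrt_rootVariance_mul {m₁ m₂ s₁ s₂ : ℝ}
    (hv₁ : s₁ ^ 2 < m₁) (hv₂ : s₂ ^ 2 < m₂) (c : ℝ) :
    sqrtCorrelation m₁ m₂ s₁ s₂ c * Real.sqrt (rootVariance m₁ s₁ * rootVariance m₂ s₂)
      = (c - s₁ * s₂) / Real.sqrt (m₁ * m₂) := by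
  have hm₁ : 0 < m₁ := (sq_nonneg s₁).trans_lt hv₁
  have hv : 0 < Real.sqrt ((m₁ - s₁ ^ 2) * (m₂ - s₂ ^ 2)) :=
    Real.sqrt_pos.mpr (mul_pos (sub_pos.mpr hv₁) (sub_pos.mpr hv₂))
  rw [sqrtCorrelation, rootVariance, rootVariance, div_mul_div_comm,
    Real.sqrt_div' _ (mul_pos hm₁ ((sq_nonneg s₂).trans_lt hv₂)).le]
  field_simp

theorem rootVariance_div {m₁ m₂ : ℝ} (hm₁ : 0 < m₁) (hm₂ : 0 < m₂) (c : ℝ) :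
    rootVariance (m₁ / m₂) (c / m₂)
      = 1 - (c / Real.sqrt (m₁ * m₂)) ^ 2 := by
  rw [div_pow, Real.sq_sqrt (mul_pos hm₁ hm₂).le, rootVariance]
  field_simp

theorem rootVariance_div_eq {m₁ m₂ s₁ s₂ : ℝ} (hs : 0 ≤ s₁ * s₂)
    (hv₁ : s₁ ^ 2 < m₁) (hv₂ : s₂ ^ 2 < m₂) (c : ℝ) :
    rootVariance (m₁ / m₂) (c / m₂)
      = 1 - (Real.sqrt ((1 - rootVariance m₁ s₁) * (1 - rootVariance m₂ s₂))
          + sqrtCorrelation m₁ m₂ s₁ s₂ c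
            * Real.sqrt (rootVariance m₁ s₁ * rootVariance m₂ s₂)) ^ 2 := by
  have hm₁ : 0 < m₁ := (sq_nonneg s₁).trans_lt hv₁
  have hm₂ : 0 < m₂ := (sq_nonneg s₂).trans_lt hv₂
  rw [sqrt_one_sub_rootVariance_mul hm₁ hm₂ hs,
    sqrtCorrelation_mul_sqrt_rootVariance_mul hv₁ hv₂, ← add_div, add_sub_cancel,
    rootVariance_div hm₁ hm₂]

end CrossRate

section ChangeOfNumeraire

variable {Ω : Type*} [MeasurableSpace Ω] {μ : Measure Ω} {f g : Ω → ℝ}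

theorem integral_div_mul_of_ae_pos (hg : ∀ᵐ ω ∂μ, 0 < g ω) :
    ∫ ω, f ω / g ω * g ω ∂μ = ∫ ω, f ω ∂μ :=
  integral_congr_ae <| hg.mono fun _ hω => div_mul_cancel₀ _ hω.ne'

theorem integral_sqrt_div_mul_of_ae_pos (hg : ∀ᵐ ω ∂μ, 0 < g ω) :
    ∫ ω, Real.sqrt (f ω / g ω) * g ω ∂μ = ∫ ω, Real.sqrt (f ω * g ω) ∂μ := by
  refine integral_congr_ae <| hg.mono fun ω hω => ?_
  calc Real.sqrt (f ω / g ω) * g ω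
      = Real.sqrt (f ω / g ω) * Real.sqrt (g ω ^ 2) := by rw [Real.sqrt_sq hω.le]
    _ = Real.sqrt (f ω * g ω) := by
      rw [← Real.sqrt_mul' _ (sq_nonneg _)]
      congr 1
      field_simp

end ChangeOfNumeraire

theorem cross_rate_root_variance_general
    {Ω : Type*} [MeasurableSpace Ω] (μ : Measure Ω)
    (x₁ x₂ : Ω → ℝ)
    (h₂pos : ∀ᵐ ω ∂μ, 0 < x₂ ω)
    (hvar₁ : 0 < (∫ ω, x₁ ω ∂μ) - (∫ ω, Real.sqrt (x₁ ω) ∂μ) ^ 2)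
    (hvar₂ : 0 < (∫ ω, x₂ ω ∂μ) - (∫ ω, Real.sqrt (x₂ ω) ∂μ) ^ 2)
    (ν₁ ν₂ ρ ν : ℝ)
    (hν₁ : ν₁ = ((∫ ω, x₁ ω ∂μ) - (∫ ω, Real.sqrt (x₁ ω) ∂μ) ^ 2) / ∫ ω, x₁ ω ∂μ)
    (hν₂ : ν₂ = ((∫ ω, x₂ ω ∂μ) - (∫ ω, Real.sqrt (x₂ ω) ∂μ) ^ 2) / ∫ ω, x₂ ω ∂μ)
    (hρ : ρ = ((∫ ω, Real.sqrt (x₁ ω * x₂ ω) ∂μ)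
          - (∫ ω, Real.sqrt (x₁ ω) ∂μ) * ∫ ω, Real.sqrt (x₂ ω) ∂μ)
        / Real.sqrt (((∫ ω, x₁ ω ∂μ) - (∫ ω, Real.sqrt (x₁ ω) ∂μ) ^ 2)
          * ((∫ ω, x₂ ω ∂μ) - (∫ ω, Real.sqrt (x₂ ω) ∂μ) ^ 2)))
    (hν : ν = (((∫ ω, (x₁ ω / x₂ ω) * x₂ ω ∂μ) / ∫ ω, x₂ ω ∂μ)
          - ((∫ ω, Real.sqrt (x₁ ω / x₂ ω) * x₂ ω ∂μ) / ∫ ω, x₂ ω ∂μ) ^ 2)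
        / ((∫ ω, (x₁ ω / x₂ ω) * x₂ ω ∂μ) / ∫ ω, x₂ ω ∂μ)) :
    ν = 1 - (Real.sqrt ((1 - ν₁) * (1 - ν₂)) + ρ * Real.sqrt (ν₁ * ν₂)) ^ 2 := by
  have hs : 0 ≤ (∫ ω, Real.sqrt (x₁ ω) ∂μ) * ∫ ω, Real.sqrt (x₂ ω) ∂μ :=
    mul_nonneg (integral_nonneg fun _ => Real.sqrt_nonneg _)
      (integral_nonneg fun _ => Real.sqrt_nonneg _)
  rw [integral_div_mul_of_ae_pos h₂pos, integral_sqrt_div_mul_of_ae_pos h₂pos] at hν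
  subst hν hν₁ hν₂ hρ
  exact CrossRate.rootVariance_div_eq hs (sub_pos.mp hvar₁) (sub_pos.mp hvar₂) _

/-- Cross FX rate root-variance: with `E[a] = Ē[a x₂]/Ē[x₂]` the measure associated to the
numéraire `x₂` and `x = x₁/x₂` the cross rate, the root-variance `ν` of `x` under `E`
satisfies `ν = 1 − (√((1−ν₁)(1−ν₂)) + ρ√(ν₁ν₂))²` in terms of the root-variances `ν₁, ν₂`
and correlation `ρ` of `√x₁, √x₂` under `Ē`. -/
theorem cross_rate_root_variance
    {Ω : Type*} [MeasurableSpace Ω] (μ : Measure Ω) [IsProbabilityMeasure μ]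
    (x₁ x₂ : Ω → ℝ)
    (h₁pos : ∀ᵐ ω ∂μ, 0 < x₁ ω) (h₂pos : ∀ᵐ ω ∂μ, 0 < x₂ ω)
    (h₁meas : Measurable x₁) (h₂meas : Measurable x₂)
    (h₁int : Integrable x₁ μ) (h₂int : Integrable x₂ μ)
    (h₁rint : Integrable (fun ω => Real.sqrt (x₁ ω)) μ)
    (h₂rint : Integrable (fun ω => Real.sqrt (x₂ ω)) μ)
    (hcint : Integrable (fun ω => Real.sqrt (x₁ ω * x₂ ω)) μ)
    (hx₂ : 0 < ∫ ω, x₂ ω ∂μ)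
    (hvar₁ : 0 < (∫ ω, x₁ ω ∂μ) - (∫ ω, Real.sqrt (x₁ ω) ∂μ) ^ 2)
    (hvar₂ : 0 < (∫ ω, x₂ ω ∂μ) - (∫ ω, Real.sqrt (x₂ ω) ∂μ) ^ 2)
    (ν₁ ν₂ ρ ν : ℝ)
    (hν₁ : ν₁ = ((∫ ω, x₁ ω ∂μ) - (∫ ω, Real.sqrt (x₁ ω) ∂μ) ^ 2) / ∫ ω, x₁ ω ∂μ)
    (hν₂ : ν₂ = ((∫ ω, x₂ ω ∂μ) - (∫ ω, Real.sqrt (x₂ ω) ∂μ) ^ 2) / ∫ ω, x₂ ω ∂μ)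
    (hρ : ρ = ((∫ ω, Real.sqrt (x₁ ω * x₂ ω) ∂μ)
          - (∫ ω, Real.sqrt (x₁ ω) ∂μ) * ∫ ω, Real.sqrt (x₂ ω) ∂μ)
        / Real.sqrt (((∫ ω, x₁ ω ∂μ) - (∫ ω, Real.sqrt (x₁ ω) ∂μ) ^ 2)
          * ((∫ ω, x₂ ω ∂μ) - (∫ ω, Real.sqrt (x₂ ω) ∂μ) ^ 2)))
    (hν : ν = (((∫ ω, (x₁ ω / x₂ ω) * x₂ ω ∂μ) / ∫ ω, x₂ ω ∂μ)
          - ((∫ ω, Real.sqrt (x₁ ω / x₂ ω) * x₂ ω ∂μ) / ∫ ω, x₂ ω ∂μ) ^ 2)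
        / ((∫ ω, (x₁ ω / x₂ ω) * x₂ ω ∂μ) / ∫ ω, x₂ ω ∂μ)) :
    ν = 1 - (Real.sqrt ((1 - ν₁) * (1 - ν₂)) + ρ * Real.sqrt (ν₁ * ν₂)) ^ 2 :=
  cross_rate_root_variance_general μ x₁ x₂ h₂pos hvar₁ hvar₂ ν₁ ν₂ ρ ν hν₁ hν₂ hρ hν
end
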